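/- Let m(N) = N/2 + log₂ C(N, ⌊N/2⌋) be the number of bits per symbol of the optimal OFDM-IM configuration, and let T : ℕ → ℝ be a function with T(N) > 0 for all N. If T grows super-linearly, i.e. lim_{N→∞} N/T(N) = 0, then the spectro-computational throughput nullifies: lim_{N→∞} m(N)/T(N) = 0. In particular, for any constant κ > 0, the original OFDM-IM mapper with T(N) = κ·N² satisfies lim_{N→∞} m(N)/(κ·N²) = 0. -/

import Mathlib

/-! A symbol of the optimal configuration carries `m(N) = N/2 + log₂ C(N, ⌊N/2⌋) ≤ 3N/2` bits,
since `C(N, k) ≤ 2^N`. Hence `m(N)/T(N)` is bounded by `3/2 · N/T(N)`, which tends to `0`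
whenever `T` grows super-linearly; the quadratic cost `κ N²` is one such `T`. -/

open Filter Topology

theorem Real.logb_two_natCast_choose_nonneg (n k : ℕ) : 0 ≤ Real.logb 2 (n.choose k) :=
  div_nonneg (Real.log_natCast_nonneg _) (Real.log_nonneg one_le_two)

theorem Real.logb_two_natCast_choose_le (n k : ℕ) : Real.logb 2 (n.choose k) ≤ n := by
  rcases Nat.eq_zero_or_pos (n.choose k) with hzero | hpos
  · simp [hzero]
  · calc Real.logb 2 (n.choose k) ≤ Real.logb 2 ((2 : ℝ) ^ n) :=
          Real.logb_le_logb_of_le one_lt_two (by exact_mod_cast hpos)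
            (by exact_mod_cast Nat.choose_le_two_pow n k)
      _ = n := by simp [Real.logb_pow]

theorem tendsto_div_zero_of_abs_le_mul_abs {α : Type*} {l : Filter α} {f g T : α → ℝ} {C : ℝ}
    (hfg : ∀ x, |f x| ≤ C * |g x|) (hg : Tendsto (fun x => g x / T x) l (𝓝 0)) :
    Tendsto (fun x => f x / T x) l (𝓝 0) := by
  refine squeeze_zero_norm (fun x => ?_) (by simpa using hg.norm.const_mul C)
  calc ‖f x / T x‖ = |f x| / |T x| := by rw [Real.norm_eq_abs, abs_div]
    _ ≤ C * |g x| / |T x| := div_le_div_of_nonneg_right (hfg x) (abs_nonneg _)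
    _ = C * (|g x| / |T x|) := mul_div_assoc ..

theorem tendsto_natCast_div_const_mul_sq_atTop (κ : ℝ) :
    Tendsto (fun N : ℕ => (N : ℝ) / (κ * (N : ℝ) ^ 2)) atTop (𝓝 0) := by
  have hinv : Tendsto (fun N : ℕ => κ⁻¹ * (N : ℝ)⁻¹) atTop (𝓝 0) := by
    simpa using tendsto_inv_atTop_zero.comp tendsto_natCast_atTop_atTop |>.const_mul κ⁻¹
  refine hinv.congr fun N => ?_
  rcases eq_or_ne (N : ℝ) 0 with hN | hN
  · simp [hN]
  · field_simp

theorem ofdm_im_superlinear_mapper_throughput_nullifies_general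
    (m : ℕ → ℝ) (hm : ∀ N : ℕ, m N = (N : ℝ) / 2 + Real.logb 2 (N.choose (N / 2)))
    (T : ℕ → ℝ)
    (hsup : Tendsto (fun N : ℕ => (N : ℝ) / T N) atTop (nhds 0)) :
    Tendsto (fun N : ℕ => m N / T N) atTop (nhds 0) ∧
    ∀ κ : ℝ, 0 < κ →
      Tendsto (fun N : ℕ => m N / (κ * (N : ℝ) ^ 2)) atTop (nhds 0) := by
  have hbits : ∀ N : ℕ, |m N| ≤ 3 / 2 * |(N : ℝ)| := fun N => by
    have hlog_nonneg := Real.logb_two_natCast_choose_nonneg N (N / 2)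
    have hlog_le := Real.logb_two_natCast_choose_le N (N / 2)
    rw [hm, Nat.abs_cast, abs_of_nonneg (by positivity)]
    linarith
  exact ⟨tendsto_div_zero_of_abs_le_mul_abs hbits hsup, fun κ _ =>
    tendsto_div_zero_of_abs_le_mul_abs hbits (tendsto_natCast_div_const_mul_sq_atTop κ)⟩

/-- With `m(N) = N/2 + log₂ C(N, ⌊N/2⌋)` bits per symbol of the optimal OFDM-IM
configuration, if the mapper cost `T` grows super-linearly (`lim N/T(N) = 0`) then the
spectro-computational throughput nullifies: `lim m(N)/T(N) = 0`. In particular, for any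
`κ > 0`, the original OFDM-IM mapper with `T(N) = κ·N²` has vanishing throughput. -/
theorem ofdm_im_superlinear_mapper_throughput_nullifies
    (m : ℕ → ℝ) (hm : ∀ N : ℕ, m N = (N : ℝ) / 2 + Real.logb 2 (N.choose (N / 2)))
    (T : ℕ → ℝ) (hTpos : ∀ N : ℕ, 0 < T N)
    (hsup : Tendsto (fun N : ℕ => (N : ℝ) / T N) atTop (nhds 0)) :
    Tendsto (fun N : ℕ => m N / T N) atTop (nhds 0) ∧
    ∀ κ : ℝ, 0 < κ →
      Tendsto (fun N : ℕ => m N / (κ * (N : ℝ) ^ 2)) atTop (nhds 0) :=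
  ofdm_im_superlinear_mapper_throughput_nullifies_general m hm T hsup
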